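/- Let G = (N,L) be a homogeneous φ-compass structure and let 0 ≤ x ≤ N. Then the atom projection Sh^G_B(x) of the shading of column x is a minimal B-sequence. -/

import Mathlib

noncomputable section

/-- Syntax of `ABD` interval temporal logic formulas over proposition letters of type `P`. -/
inductive Fml (P : Type) : Type where
  | bot  : Fml P
  | atom : P → Fml P
  | neg  : Fml P → Fml P
  | or   : Fml P → Fml P → Fml P
  | diaA : Fml P → Fml P
  | diaB : Fml P → Fml P
  | diaD : Fml P → Fml P
deriving DecidableEq

namespace Fml

variable {P : Type}

def and (ψ χ : Fml P) : Fml P := neg (or (neg ψ) (neg χ))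
def imp (ψ χ : Fml P) : Fml P := or (neg ψ) χ
def iff' (ψ χ : Fml P) : Fml P := Fml.and (imp ψ χ) (imp χ ψ)
def top : Fml P := neg bot
def boxA (ψ : Fml P) : Fml P := neg (diaA (neg ψ))
def boxB (ψ : Fml P) : Fml P := neg (diaB (neg ψ))
def boxD (ψ : Fml P) : Fml P := neg (diaD (neg ψ))
/-- `π = [B]⊥`, true exactly at point-intervals. -/
def pi : Fml P := boxB bot
/-- the global operator `[G]ψ = ψ ∧ [A]ψ ∧ [B]ψ ∧ [B][A]ψ`. -/
def glob (ψ : Fml P) : Fml P := Fml.and ψ (Fml.and (boxA ψ) (Fml.and (boxB ψ) (boxB (boxA ψ))))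
def bigAnd (l : List (Fml P)) : Fml P := l.foldr Fml.and top
def bigOr (l : List (Fml P)) : Fml P := l.foldr Fml.or bot

end Fml

attribute [local instance] Classical.propDecidable

/-- The set of subformulas of a formula. -/
def subf : Fml ℕ → Finset (Fml ℕ)
  | Fml.bot => {Fml.bot}
  | Fml.atom p => {Fml.atom p}
  | Fml.neg ψ => insert (Fml.neg ψ) (subf ψ)
  | Fml.or ψ χ => insert (Fml.or ψ χ) (subf ψ ∪ subf χ)
  | Fml.diaA ψ => insert (Fml.diaA ψ) (subf ψ)
  | Fml.diaB ψ => insert (Fml.diaB ψ) (subf ψ)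
  | Fml.diaD ψ => insert (Fml.diaD ψ) (subf ψ)

/-- Negation normalizing double negations (`¬` of `¬ψ` is `ψ`). -/
def negf : Fml ℕ → Fml ℕ
  | Fml.neg ψ => ψ
  | ψ => Fml.neg ψ

/-- The closure `clos(φ)`: all subformulas of `φ` and their negations, plus `π` and `¬π`. -/
def clos (φ : Fml ℕ) : Finset (Fml ℕ) :=
  subf φ ∪ (subf φ).image Fml.neg ∪ {Fml.pi, Fml.neg Fml.pi}

/-- `TF^φ_A = {ψ : ⟨A⟩ψ ∈ clos(φ)}`. -/
def argA (φ : Fml ℕ) : Finset (Fml ℕ) :=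
  (clos φ).biUnion fun ψ => match ψ with | Fml.diaA χ => {χ} | _ => ∅

/-- `{ψ : ⟨B⟩ψ ∈ clos(φ)}`. -/
def argB (φ : Fml ℕ) : Finset (Fml ℕ) :=
  (clos φ).biUnion fun ψ => match ψ with | Fml.diaB χ => {χ} | _ => ∅

/-- `{ψ : ⟨D⟩ψ ∈ clos(φ)}`. -/
def argD (φ : Fml ℕ) : Finset (Fml ℕ) :=
  (clos φ).biUnion fun ψ => match ψ with | Fml.diaD χ => {χ} | _ => ∅

/-- `{ψ : [B]ψ ∈ clos(φ)}` (recall `[B]ψ = ¬⟨B⟩¬ψ`). -/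
def boxArgB (φ : Fml ℕ) : Finset (Fml ℕ) :=
  (clos φ).biUnion fun ψ =>
    match ψ with | Fml.neg (Fml.diaB (Fml.neg χ)) => {χ} | _ => ∅

/-- `{ψ : [D]ψ ∈ clos(φ)}` (recall `[D]ψ = ¬⟨D⟩¬ψ`). -/
def boxArgD (φ : Fml ℕ) : Finset (Fml ℕ) :=
  (clos φ).biUnion fun ψ =>
    match ψ with | Fml.neg (Fml.diaD (Fml.neg χ)) => {χ} | _ => ∅

/-- The proposition letters occurring in `clos(φ)`. -/
def propsOf (φ : Fml ℕ) : Finset ℕ :=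
  (clos φ).biUnion fun ψ => match ψ with | Fml.atom p => {p} | _ => ∅

/-- `|φ| = |clos(φ)| / 2`. -/
def fsize (φ : Fml ℕ) : ℕ := (clos φ).card / 2

/-- The three possible values `◇, ◆, □` of the function `α` of an atom. -/
inductive AFlag : Type where
  | dia  : AFlag  -- `◇`
  | bdia : AFlag  -- `◆`
  | box  : AFlag  -- `□`
deriving DecidableEq

/-- A `φ`-atom `F_α = (F, α)`: a maximal consistent subset `F` of `clos(φ)` together
with a function `α : TF^φ_A → {◇,◆,□}` (extended by the value `□` outside `TF^φ_A`,
so that equality of the `α` components is equality of functions). -/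
structure Atom (φ : Fml ℕ) where
  F : Finset (Fml ℕ)
  A : Fml ℕ → AFlag
  sub : F ⊆ clos φ
  negCond : ∀ ψ ∈ clos φ, (ψ ∈ F ↔ negf ψ ∉ F)
  orCond : ∀ ψ χ : Fml ℕ, Fml.or ψ χ ∈ clos φ → (Fml.or ψ χ ∈ F ↔ (ψ ∈ F ∨ χ ∈ F))
  piCond : Fml.pi ∈ F → ∀ ψ : Fml ℕ, Fml.boxA ψ ∈ F → ψ ∈ F
  aBox : ∀ ψ ∈ argA φ, A ψ = AFlag.box → negf ψ ∈ F
  aMem : ∀ ψ ∈ argA φ, ψ ∈ F → A ψ = AFlag.bdia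
  aDia : ∀ ψ ∈ argA φ, Fml.pi ∈ F → A ψ = AFlag.dia → (Fml.diaA ψ ∈ F ∧ ψ ∉ F)
  aBdia : ∀ ψ ∈ argA φ, Fml.pi ∈ F → A ψ = AFlag.bdia → ψ ∈ F
  aOut : ∀ ψ : Fml ℕ, ψ ∉ argA φ → A ψ = AFlag.box

variable {φ : Fml ℕ}

/-- `Req_A(F_α) = {ψ ∈ clos(φ) : ⟨A⟩ψ ∈ F}`. -/
def ReqA (a : Atom φ) : Finset (Fml ℕ) := (argA φ).filter fun ψ => Fml.diaA ψ ∈ a.F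
/-- `Req_B(F_α) = {ψ ∈ clos(φ) : ⟨B⟩ψ ∈ F}`. -/
def ReqB (a : Atom φ) : Finset (Fml ℕ) := (argB φ).filter fun ψ => Fml.diaB ψ ∈ a.F
/-- `Req_D(F_α) = {ψ ∈ clos(φ) : ⟨D⟩ψ ∈ F}`. -/
def ReqD (a : Atom φ) : Finset (Fml ℕ) := (argD φ).filter fun ψ => Fml.diaD ψ ∈ a.F
/-- `Obs_B(F_α) = {ψ ∈ F : ⟨B⟩ψ ∈ clos(φ)}`. -/
def ObsB (a : Atom φ) : Finset (Fml ℕ) := (argB φ).filter fun ψ => ψ ∈ a.F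
/-- `Obs_D(F_α) = {ψ ∈ F : ⟨D⟩ψ ∈ clos(φ)}`. -/
def ObsD (a : Atom φ) : Finset (Fml ℕ) := (argD φ).filter fun ψ => ψ ∈ a.F
/-- `Box_B(F_α) = {ψ : [B]ψ ∈ F}`. -/
def BoxB (a : Atom φ) : Finset (Fml ℕ) := (boxArgB φ).filter fun ψ => Fml.boxB ψ ∈ a.F
/-- `Box_D(F_α) = {ψ : [D]ψ ∈ F}`. -/
def BoxD (a : Atom φ) : Finset (Fml ℕ) := (boxArgD φ).filter fun ψ => Fml.boxD ψ ∈ a.F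

/-- The relation `F_α →_B G_β`. -/
def stepB (a b : Atom φ) : Prop :=
  ReqB a = ReqB b ∪ ObsB b ∧
  ∀ ψ ∈ argA φ, (b.A ψ = AFlag.bdia ∨ b.A ψ = AFlag.box ∨ ψ ∉ a.F) → a.A ψ = b.A ψ

/-- The relation `F_α →_D G_β`. -/
def stepD (a b : Atom φ) : Prop := ReqD b ∪ ObsD b ⊆ ReqD a

/-- An atom is initial iff `π ∈ F`. -/
def Initial (a : Atom φ) : Prop := Fml.pi ∈ a.F

/-- An atom is final iff `α(ψ) ∈ {◆,□}` for all `ψ ∈ TF^φ_A`. -/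
def Final (a : Atom φ) : Prop := ∀ ψ ∈ argA φ, a.A ψ ≠ AFlag.dia

/-- The function `Δ↑`. -/
def delta (a : Atom φ) : ℤ :=
  (2 * ((argB φ).card : ℤ) - 2 * ((ReqB a).card : ℤ) - (((ObsB a) \ (ReqB a)).card : ℤ))
  + (((argD φ).card : ℤ) - ((ReqD a).card : ℤ))
  + (((propsOf φ).card : ℤ)
      - (((propsOf φ).filter fun p => Fml.neg (Fml.atom p) ∈ a.F).card : ℤ))
  + (((argA φ).filter fun ψ => a.A ψ = AFlag.dia).card : ℤ)

/-- A `φ`-compass structure `G = (N, L)`: a labelling of the points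
`{(x,y) : 0 ≤ x ≤ y ≤ N}` by `φ`-atoms satisfying initial formula, `A`-consistency,
`B`-consistency, `D`-consistency, `D`-fulfilment and `A`-fulfilment. -/
structure Compass (φ : Fml ℕ) where
  N : ℕ
  L : ℕ → ℕ → Atom φ
  initF : φ ∈ (L 0 N).F
  consA : ∀ x y : ℕ, x ≤ y → y ≤ N → ReqA (L x y) = ReqA (L y y)
  consB : ∀ x y : ℕ, x ≤ y → y < N → stepB (L x (y + 1)) (L x y)
  pointB : ∀ x : ℕ, x ≤ N → ReqB (L x x) = ∅
  consD : ∀ x x' y' y : ℕ, x < x' → x' ≤ y' → y' < y → y ≤ N → stepD (L x y) (L x' y')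
  fulD : ∀ x y : ℕ, x ≤ y → y ≤ N → ∀ ψ ∈ ReqD (L x y),
    ∃ x' y' : ℕ, x < x' ∧ x' ≤ y' ∧ y' < y ∧ ψ ∈ (L x' y').F
  fulA : ∀ x : ℕ, x ≤ N → Final (L x N)

/-- A compass structure is homogeneous if the proposition letters of `L(x,y)` are
exactly those holding at all point atoms `L(z,z)` for `x ≤ z ≤ y`. -/
def HomogC {φ : Fml ℕ} (G : Compass φ) : Prop :=
  ∀ x y : ℕ, x ≤ y → y ≤ G.N → ∀ p : ℕ,
    (Fml.atom p ∈ (G.L x y).F ↔ ∀ z, x ≤ z → z ≤ y → Fml.atom p ∈ (G.L z z).F)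

/-- `y` is one of the rows recorded in the shading of column `x`: it lies in `[x, N]`
and it is the minimum row of column `x` exhibiting its value of `Δ↑`. -/
def isShRow {φ : Fml ℕ} (G : Compass φ) (x y : ℕ) : Prop :=
  x ≤ y ∧ y ≤ G.N ∧ ∀ z, z < y → x ≤ z → delta (G.L x z) ≠ delta (G.L x y)

/-- `Sh^G_ℕ(x)`: the (increasing) list of rows of the shading of column `x`. -/
def shRows {φ : Fml ℕ} (G : Compass φ) (x : ℕ) : List ℕ :=
  (List.range (G.N + 1)).filter fun y => decide (isShRow G x y)

/-- `Sh^G_B(x)`: the atom projection of the shading of column `x`. -/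
def shB {φ : Fml ℕ} (G : Compass φ) (x : ℕ) : List (Atom φ) :=
  (shRows G x).map fun y => G.L x y

/-- A `B`-sequence of atoms `F⁰ … Fⁿ`. -/
def IsBSeq {φ : Fml ℕ} (l : List (Atom φ)) : Prop :=
  ∃ h : l ≠ [],
    Initial (l.head h) ∧ Final (l.getLast h) ∧
    ∀ i : ℕ, ∀ hi : i + 1 < l.length,
      stepB (l.get ⟨i + 1, hi⟩) (l.get ⟨i, Nat.lt_of_succ_lt hi⟩) ∧
      ReqD (l.get ⟨i, Nat.lt_of_succ_lt hi⟩) ⊆ ReqD (l.get ⟨i + 1, hi⟩) ∧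
      ∀ p : ℕ, Fml.atom p ∈ (l.get ⟨i + 1, hi⟩).F →
        Fml.atom p ∈ (l.get ⟨i, Nat.lt_of_succ_lt hi⟩).F

/-- A minimal `B`-sequence: a `B`-sequence along which `Δ↑` strictly decreases. -/
def IsMinBSeq {φ : Fml ℕ} (l : List (Atom φ)) : Prop :=
  IsBSeq l ∧ ∀ i : ℕ, ∀ hi : i + 1 < l.length,
    delta (l.get ⟨i + 1, hi⟩) < delta (l.get ⟨i, Nat.lt_of_succ_lt hi⟩)

namespace ShadingProofAux

variable {φ : Fml ℕ}

lemma aflag_cases (f : AFlag) : f = AFlag.dia ∨ f = AFlag.bdia ∨ f = AFlag.box := by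
  cases f <;> simp

/-- `◇`-set of an atom. -/
def diaSet (a : Atom φ) : Finset (Fml ℕ) := (argA φ).filter fun ψ => a.A ψ = AFlag.dia

/-- negated-proposition set of an atom. -/
def negPr (a : Atom φ) : Finset ℕ :=
  (propsOf φ).filter fun p => Fml.neg (Fml.atom p) ∈ a.F

lemma delta_def (a : Atom φ) :
    delta a = (2 * ((argB φ).card : ℤ) - 2 * ((ReqB a).card : ℤ)
        - (((ObsB a) \ (ReqB a)).card : ℤ))
      + (((argD φ).card : ℤ) - ((ReqD a).card : ℤ))
      + (((propsOf φ).card : ℤ) - ((negPr a).card : ℤ))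
      + ((diaSet a).card : ℤ) := rfl

lemma pi_mem_clos : Fml.pi ∈ clos φ := by
  simp [clos]

lemma initial_point (G : Compass φ) (x : ℕ) (hx : x ≤ G.N) : Fml.pi ∈ (G.L x x).F := by
  have hc := (G.L x x).negCond Fml.pi pi_mem_clos
  have hn : negf (Fml.pi : Fml ℕ) = Fml.diaB (Fml.neg Fml.bot) := rfl
  rw [hc, hn]
  intro hmem
  have hcl : Fml.diaB (Fml.neg Fml.bot) ∈ clos φ := (G.L x x).sub hmem
  have hargB : Fml.neg Fml.bot ∈ argB φ := by
    rw [argB, Finset.mem_biUnion]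
    exact ⟨Fml.diaB (Fml.neg Fml.bot), hcl, by simp⟩
  have : Fml.neg Fml.bot ∈ ReqB (G.L x x) := Finset.mem_filter.mpr ⟨hargB, hmem⟩
  rw [G.pointB x hx] at this
  simp at this

section
variable (G : Compass φ) (x : ℕ)

lemma flag_step (y : ℕ) (hxy : x ≤ y) (hyN : y < G.N) (ψ : Fml ℕ)
    (h : (G.L x y).A ψ ≠ AFlag.dia) : (G.L x (y+1)).A ψ = (G.L x y).A ψ := by
  by_cases hψ : ψ ∈ argA φ
  · refine (G.consB x y hxy hyN).2 ψ hψ ?_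
    rcases aflag_cases ((G.L x y).A ψ) with h1 | h1 | h1 <;> tauto
  · rw [(G.L x (y+1)).aOut ψ hψ, (G.L x y).aOut ψ hψ]

lemma flag_mono (y z : ℕ) (hxy : x ≤ y) (hyz : y ≤ z) (hzN : z ≤ G.N) (ψ : Fml ℕ)
    (h : (G.L x y).A ψ ≠ AFlag.dia) : (G.L x z).A ψ = (G.L x y).A ψ := by
  induction z, hyz using Nat.le_induction with
  | base => rfl
  | succ z hz ih =>
    have hzN' : z < G.N := by omega
    have ih' := ih (by omega)
    rw [flag_step G x z (hxy.trans hz) hzN' ψ (by rw [ih']; exact h), ih']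

lemma dia_mono (y z : ℕ) (hxy : x ≤ y) (hyz : y ≤ z) (hzN : z ≤ G.N) :
    diaSet (G.L x z) ⊆ diaSet (G.L x y) := by
  intro ψ hmem
  rw [diaSet, Finset.mem_filter] at hmem ⊢
  refine ⟨hmem.1, ?_⟩
  by_contra h
  have hf := flag_mono G x y z hxy hyz hzN ψ h
  exact h (by rw [← hf]; exact hmem.2)

lemma reqD_step (y : ℕ) (hxy : x ≤ y) (hyN : y < G.N) :
    ReqD (G.L x y) ⊆ ReqD (G.L x (y+1)) := by
  intro ψ hψ
  obtain ⟨x', y', hx', hxy', hy', hmem⟩ := G.fulD x y hxy (le_of_lt hyN) ψ hψ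
  have hstep := G.consD x x' y' (y+1) hx' hxy' (by omega) (by omega)
  apply hstep
  have hargD : ψ ∈ argD φ := (Finset.mem_filter.mp hψ).1
  exact Finset.mem_union_right _ (Finset.mem_filter.mpr ⟨hargD, hmem⟩)

lemma reqD_mono (y z : ℕ) (hxy : x ≤ y) (hyz : y ≤ z) (hzN : z ≤ G.N) :
    ReqD (G.L x y) ⊆ ReqD (G.L x z) := by
  induction z, hyz using Nat.le_induction with
  | base => exact Finset.Subset.refl _
  | succ z hz ih =>
    exact (ih (by omega)).trans (reqD_step G x z (hxy.trans hz) (by omega))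

lemma prop_mono (hG : HomogC G) (y z : ℕ) (hxy : x ≤ y) (hyz : y ≤ z) (hzN : z ≤ G.N)
    (p : ℕ) (h : Fml.atom p ∈ (G.L x z).F) : Fml.atom p ∈ (G.L x y).F := by
  have hz := (hG x z (hxy.trans hyz) hzN p).mp h
  exact (hG x y hxy (hyz.trans hzN) p).mpr fun w hw hw2 => hz w hw (hw2.trans hyz)

lemma atom_mem_clos (p : ℕ) (hp : p ∈ propsOf φ) : Fml.atom p ∈ clos φ := by
  rw [propsOf, Finset.mem_biUnion] at hp
  obtain ⟨ψ, hψ, h⟩ := hp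
  cases ψ <;> simp_all

lemma neg_atom_iff (a : Atom φ) (p : ℕ) (hp : Fml.atom p ∈ clos φ) :
    Fml.neg (Fml.atom p) ∈ a.F ↔ Fml.atom p ∉ a.F := by
  have h := a.negCond (Fml.atom p) hp
  have hn : negf (Fml.atom p) = Fml.neg (Fml.atom p) := rfl
  rw [hn] at h
  tauto

lemma negPr_mono (hG : HomogC G) (y z : ℕ) (hxy : x ≤ y) (hyz : y ≤ z) (hzN : z ≤ G.N) :
    negPr (G.L x y) ⊆ negPr (G.L x z) := by
  intro p hp
  rw [negPr, Finset.mem_filter] at hp ⊢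
  refine ⟨hp.1, ?_⟩
  have hcl := atom_mem_clos (φ := φ) p hp.1
  rw [neg_atom_iff _ p hcl]
  rw [neg_atom_iff _ p hcl] at hp
  intro h
  exact hp.2 (prop_mono G x hG y z hxy hyz hzN p h)

lemma reqB_card_step (y : ℕ) (hxy : x ≤ y) (hyN : y < G.N) :
    ((ReqB (G.L x (y+1))).card : ℤ)
      = ((ReqB (G.L x y)).card : ℤ) + ((ObsB (G.L x y) \ ReqB (G.L x y)).card : ℤ) := by
  have h := (G.consB x y hxy hyN).1
  rw [h, ← Finset.union_sdiff_self_eq_union,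
    Finset.card_union_of_disjoint Finset.disjoint_sdiff]
  push_cast
  ring

lemma delta_step_le (hG : HomogC G) (y : ℕ) (hxy : x ≤ y) (hyN : y < G.N) :
    delta (G.L x (y+1)) ≤ delta (G.L x y) := by
  have hB := reqB_card_step G x y hxy hyN
  have hD : ((ReqD (G.L x y)).card : ℤ) ≤ ((ReqD (G.L x (y+1))).card : ℤ) := by
    exact_mod_cast Finset.card_le_card (reqD_step G x y hxy hyN)
  have hP : ((negPr (G.L x y)).card : ℤ) ≤ ((negPr (G.L x (y+1))).card : ℤ) := by
    exact_mod_cast Finset.card_le_card (negPr_mono G x hG y (y+1) hxy (by omega) (by omega))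
  have hA : ((diaSet (G.L x (y+1))).card : ℤ) ≤ ((diaSet (G.L x y)).card : ℤ) := by
    exact_mod_cast Finset.card_le_card (dia_mono G x y (y+1) hxy (by omega) (by omega))
  have h1 : (0:ℤ) ≤ ((ObsB (G.L x y) \ ReqB (G.L x y)).card : ℤ) := Int.natCast_nonneg _
  have h2 : (0:ℤ) ≤ ((ObsB (G.L x (y+1)) \ ReqB (G.L x (y+1))).card : ℤ) := Int.natCast_nonneg _
  rw [delta_def, delta_def]
  linarith

lemma delta_mono (hG : HomogC G) (y z : ℕ) (hxy : x ≤ y) (hyz : y ≤ z) (hzN : z ≤ G.N) :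
    delta (G.L x z) ≤ delta (G.L x y) := by
  induction z, hyz using Nat.le_induction with
  | base => exact le_refl _
  | succ z hz ih =>
    exact (delta_step_le G x hG z (hxy.trans hz) (by omega)).trans (ih (by omega))

/-- B-part of `delta`. -/
def bPart (a : Atom φ) : ℤ :=
  2 * ((argB φ).card : ℤ) - 2 * ((ReqB a).card : ℤ) - (((ObsB a) \ (ReqB a)).card : ℤ)

lemma bPart_step_le (y : ℕ) (hxy : x ≤ y) (hyN : y < G.N) :
    bPart (G.L x (y+1)) ≤ bPart (G.L x y) := by
  have hB := reqB_card_step G x y hxy hyN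
  have h1 : (0:ℤ) ≤ ((ObsB (G.L x y) \ ReqB (G.L x y)).card : ℤ) := Int.natCast_nonneg _
  have h2 : (0:ℤ) ≤ ((ObsB (G.L x (y+1)) \ ReqB (G.L x (y+1))).card : ℤ) := Int.natCast_nonneg _
  rw [bPart, bPart]
  linarith

lemma bPart_mono (y z : ℕ) (hxy : x ≤ y) (hyz : y ≤ z) (hzN : z ≤ G.N) :
    bPart (G.L x z) ≤ bPart (G.L x y) := by
  induction z, hyz using Nat.le_induction with
  | base => exact le_refl _
  | succ z hz ih =>
    exact (bPart_step_le G x z (hxy.trans hz) (by omega)).trans (ih (by omega))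

lemma delta_split (a : Atom φ) :
    delta a = bPart a + (((argD φ).card : ℤ) - ((ReqD a).card : ℤ))
      + (((propsOf φ).card : ℤ) - ((negPr a).card : ℤ)) + ((diaSet a).card : ℤ) := rfl

/-- When `Δ↑` is equal across a range, the `◇`-sets agree. -/
lemma range_dia_eq (hG : HomogC G) (y z : ℕ) (hxy : x ≤ y) (hyz : y ≤ z) (hzN : z ≤ G.N)
    (heq : delta (G.L x z) = delta (G.L x y)) :
    diaSet (G.L x z) = diaSet (G.L x y) := by
  have hb := bPart_mono G x y z hxy hyz hzN
  have hD : ((ReqD (G.L x y)).card : ℤ) ≤ ((ReqD (G.L x z)).card : ℤ) := by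
    exact_mod_cast Finset.card_le_card (reqD_mono G x y z hxy hyz hzN)
  have hP : ((negPr (G.L x y)).card : ℤ) ≤ ((negPr (G.L x z)).card : ℤ) := by
    exact_mod_cast Finset.card_le_card (negPr_mono G x hG y z hxy hyz hzN)
  have hA : diaSet (G.L x z) ⊆ diaSet (G.L x y) := dia_mono G x y z hxy hyz hzN
  have hA' : ((diaSet (G.L x z)).card : ℤ) ≤ ((diaSet (G.L x y)).card : ℤ) := by
    exact_mod_cast Finset.card_le_card hA
  rw [delta_split, delta_split] at heq
  have hcard : ((diaSet (G.L x y)).card : ℤ) ≤ ((diaSet (G.L x z)).card : ℤ) := by linarith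
  exact Finset.eq_of_subset_of_card_le hA (by exact_mod_cast hcard)

/-- Per-step consequences of `Δ↑` staying constant. -/
lemma step_eq (hG : HomogC G) (y : ℕ) (hxy : x ≤ y) (hyN : y < G.N)
    (heq : delta (G.L x (y+1)) = delta (G.L x y)) :
    ObsB (G.L x y) ⊆ ReqB (G.L x y) ∧ ObsB (G.L x (y+1)) ⊆ ReqB (G.L x (y+1)) ∧
      ReqB (G.L x (y+1)) = ReqB (G.L x y) := by
  have hB := reqB_card_step G x y hxy hyN
  have hD : ((ReqD (G.L x y)).card : ℤ) ≤ ((ReqD (G.L x (y+1))).card : ℤ) := by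
    exact_mod_cast Finset.card_le_card (reqD_step G x y hxy hyN)
  have hP : ((negPr (G.L x y)).card : ℤ) ≤ ((negPr (G.L x (y+1))).card : ℤ) := by
    exact_mod_cast Finset.card_le_card (negPr_mono G x hG y (y+1) hxy (by omega) (by omega))
  have hA : ((diaSet (G.L x (y+1))).card : ℤ) ≤ ((diaSet (G.L x y)).card : ℤ) := by
    exact_mod_cast Finset.card_le_card (dia_mono G x y (y+1) hxy (by omega) (by omega))
  have h1 : (0:ℤ) ≤ ((ObsB (G.L x y) \ ReqB (G.L x y)).card : ℤ) := Int.natCast_nonneg _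
  have h2 : (0:ℤ) ≤ ((ObsB (G.L x (y+1)) \ ReqB (G.L x (y+1))).card : ℤ) := Int.natCast_nonneg _
  rw [delta_def, delta_def] at heq
  have hz1 : ((ObsB (G.L x y) \ ReqB (G.L x y)).card : ℤ) = 0 := by linarith
  have hz2 : ((ObsB (G.L x (y+1)) \ ReqB (G.L x (y+1))).card : ℤ) = 0 := by linarith
  have hs1 : ObsB (G.L x y) ⊆ ReqB (G.L x y) := by
    rw [← Finset.sdiff_eq_empty_iff_subset, ← Finset.card_eq_zero]
    exact_mod_cast hz1
  have hs2 : ObsB (G.L x (y+1)) ⊆ ReqB (G.L x (y+1)) := by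
    rw [← Finset.sdiff_eq_empty_iff_subset, ← Finset.card_eq_zero]
    exact_mod_cast hz2
  refine ⟨hs1, hs2, ?_⟩
  rw [(G.consB x y hxy hyN).1, Finset.union_eq_left.mpr hs1]

/-- Data preserved along a `Δ↑`-constant vertical segment. -/
lemma const_seg (hG : HomogC G) (y z : ℕ) (hxy : x ≤ y) (hyz : y ≤ z) (hzN : z ≤ G.N)
    (heq : delta (G.L x z) = delta (G.L x y)) :
    ReqB (G.L x z) = ReqB (G.L x y) ∧ (∀ ψ, (G.L x z).A ψ = (G.L x y).A ψ) ∧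
      (y < z → ObsB (G.L x z) ⊆ ReqB (G.L x z) ∧ ObsB (G.L x y) ⊆ ReqB (G.L x y)) := by
  induction z, hyz using Nat.le_induction with
  | base => exact ⟨rfl, fun ψ => rfl, fun h => absurd h (lt_irrefl y)⟩
  | succ z hz ih =>
    have hzN' : z ≤ G.N := by omega
    have hdz : delta (G.L x z) = delta (G.L x y) := by
      have h1 := delta_mono G x hG y z hxy hz hzN'
      have h2 := delta_mono G x hG z (z+1) (hxy.trans hz) (by omega) hzN
      omega
    obtain ⟨ih1, ih2, ih3⟩ := ih hzN' hdz
    have hse : delta (G.L x (z+1)) = delta (G.L x z) := by rw [heq, hdz]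
    obtain ⟨hb, ha, hreq⟩ := step_eq G x hG z (hxy.trans hz) (by omega) hse
    have hdia := range_dia_eq G x hG z (z+1) (hxy.trans hz) (by omega) hzN hse
    refine ⟨by rw [hreq, ih1], ?_, ?_⟩
    · intro ψ
      by_cases hd : (G.L x z).A ψ = AFlag.dia
      · by_cases hψ : ψ ∈ argA φ
        · have hmem : ψ ∈ diaSet (G.L x (z+1)) := by
            rw [hdia, diaSet, Finset.mem_filter]; exact ⟨hψ, hd⟩
          rw [diaSet, Finset.mem_filter] at hmem
          rw [hmem.2, ← hd, ih2]
        · rw [(G.L x (z+1)).aOut ψ hψ, ← ih2, (G.L x z).aOut ψ hψ]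
      · rw [flag_step G x z (hxy.trans hz) (by omega) ψ hd, ih2]
    · intro _
      refine ⟨ha, ?_⟩
      rcases eq_or_lt_of_le hz with h | h
      · rw [h]; exact hb
      · exact (ih3 h).2

/-- `Δ↑` is constant where no shading row occurs. -/
lemma const_on (hG : HomogC G) (u v : ℕ) (hxu : x ≤ u) (hvN : v ≤ G.N)
    (hno : ∀ w, u < w → w ≤ v → ¬ isShRow G x w) :
    ∀ w, u ≤ w → w ≤ v → delta (G.L x w) = delta (G.L x u) := by
  intro w
  induction w using Nat.strong_induction_on with
  | _ w ih =>
    intro huw hwv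
    rcases eq_or_lt_of_le huw with h | h
    · rw [← h]
    · have hns := hno w h hwv
      have hxw : x ≤ w := hxu.trans huw
      have hwN : w ≤ G.N := hwv.trans hvN
      have hex : ∃ z, z < w ∧ x ≤ z ∧ delta (G.L x z) = delta (G.L x w) := by
        by_contra hc
        push_neg at hc
        exact hns ⟨hxw, hwN, fun z hz hxz => hc z hz hxz⟩
      obtain ⟨z, hzw, hxz, hdz⟩ := hex
      rcases le_or_gt u z with h1 | h1
      · rw [← hdz]
        exact ih z hzw h1 (by omega)
      · have h2 : delta (G.L x u) ≤ delta (G.L x z) :=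
          delta_mono G x hG z u hxz (le_of_lt h1) (by omega)
        have h3 : delta (G.L x w) ≤ delta (G.L x u) :=
          delta_mono G x hG u w hxu huw hwN
        omega

lemma mem_shRows (y : ℕ) : y ∈ shRows G x ↔ isShRow G x y := by
  rw [shRows, List.mem_filter, List.mem_range, decide_eq_true_iff]
  constructor
  · exact fun h => h.2
  · intro h
    have := h.2.1
    exact ⟨by omega, h⟩

lemma shRows_pairwise : (shRows G x).Pairwise (· < ·) :=
  List.Pairwise.sublist List.filter_sublist List.pairwise_lt_range

end

end ShadingProofAux


open ShadingProofAux in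
/-- Lemma 3 of the paper. In a homogeneous compass structure, the atom
projection of the shading of any column is a minimal `B`-sequence. -/
theorem shading_isMinBSeq (φ : Fml ℕ) (G : Compass φ) (hG : HomogC G)
    (x : ℕ) (hx : x ≤ G.N) :
    IsMinBSeq (shB G x) := by
  classical
  set l := shRows G x with hl
  have hpw : l.Pairwise (· < ·) := shRows_pairwise G x
  have hmono : ∀ i j : Fin l.length, i < j → l.get i < l.get j :=
    List.pairwise_iff_get.mp hpw
  have hxsh : isShRow G x x := ⟨le_refl x, hx, fun z hz hxz => by omega⟩
  have hxmem : x ∈ l := (mem_shRows G x x).mpr hxsh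
  have hne : l ≠ [] := List.ne_nil_of_mem hxmem
  have hlen : 0 < l.length := List.length_pos_iff.mpr hne
  have hget_sh : ∀ i : Fin l.length, isShRow G x (l.get i) := fun i =>
    (mem_shRows G x (l.get i)).mp (List.get_mem l i)
  -- the first shading row is `x`
  have hget0 : l.get ⟨0, hlen⟩ = x := by
    obtain ⟨j, hj⟩ := List.get_of_mem hxmem
    rcases Nat.eq_zero_or_pos j.1 with h0 | h0
    · rw [← hj]; congr 1; exact Fin.ext h0.symm
    · exfalso
      have h1 : l.get ⟨0, hlen⟩ < l.get j := hmono ⟨0, hlen⟩ j h0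
      have h2 : x ≤ l.get ⟨0, hlen⟩ := (hget_sh ⟨0, hlen⟩).1
      rw [hj] at h1; omega
  -- no shading row strictly between two consecutive recorded rows
  have hno_between : ∀ (i : ℕ) (hi : i + 1 < l.length), ∀ w,
      l.get ⟨i, Nat.lt_of_succ_lt hi⟩ < w → w < l.get ⟨i+1, hi⟩ → ¬ isShRow G x w := by
    intro i hi w hw1 hw2 hsw
    have hwl : w ∈ l := (mem_shRows G x w).mpr hsw
    obtain ⟨j, hj⟩ := List.get_of_mem hwl
    rcases lt_or_ge j.1 (i+1) with h | h
    · have hle : l.get j ≤ l.get ⟨i, Nat.lt_of_succ_lt hi⟩ := by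
        rcases eq_or_lt_of_le (by omega : j.1 ≤ i) with he | hlt
        · have hj' : j = ⟨i, Nat.lt_of_succ_lt hi⟩ := Fin.ext he
          rw [hj']
        · exact le_of_lt (hmono j ⟨i, Nat.lt_of_succ_lt hi⟩ hlt)
      omega
    · have hle : l.get ⟨i+1, hi⟩ ≤ l.get j := by
        rcases eq_or_lt_of_le h with he | hlt
        · have hj' : (⟨i+1, hi⟩ : Fin l.length) = j := Fin.ext he
          rw [← hj']
        · exact le_of_lt (hmono ⟨i+1, hi⟩ j hlt)
      omega
  have hlast_idx : l.length - 1 < l.length := by omega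
  -- no shading row after the last recorded row
  have hno_after : ∀ w, l.get ⟨l.length - 1, hlast_idx⟩ < w → w ≤ G.N →
      ¬ isShRow G x w := by
    intro w hw1 hw2 hsw
    have hwl : w ∈ l := (mem_shRows G x w).mpr hsw
    obtain ⟨j, hj⟩ := List.get_of_mem hwl
    have hle : l.get j ≤ l.get ⟨l.length - 1, hlast_idx⟩ := by
      rcases eq_or_lt_of_le (by omega : j.1 ≤ l.length - 1) with he | hlt
      · have hj' : j = ⟨l.length - 1, hlast_idx⟩ := Fin.ext he
        rw [hj']
      · exact le_of_lt (hmono j ⟨l.length - 1, hlast_idx⟩ hlt)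
    omega
  -- the key facts relating consecutive recorded atoms
  have key : ∀ (i : ℕ) (hi : i + 1 < l.length),
      stepB (G.L x (l.get ⟨i+1, hi⟩)) (G.L x (l.get ⟨i, Nat.lt_of_succ_lt hi⟩)) ∧
      ReqD (G.L x (l.get ⟨i, Nat.lt_of_succ_lt hi⟩)) ⊆ ReqD (G.L x (l.get ⟨i+1, hi⟩)) ∧
      (∀ p : ℕ, Fml.atom p ∈ (G.L x (l.get ⟨i+1, hi⟩)).F →
        Fml.atom p ∈ (G.L x (l.get ⟨i, Nat.lt_of_succ_lt hi⟩)).F) ∧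
      delta (G.L x (l.get ⟨i+1, hi⟩)) < delta (G.L x (l.get ⟨i, Nat.lt_of_succ_lt hi⟩)) := by
    intro i hi
    set u := l.get ⟨i, Nat.lt_of_succ_lt hi⟩ with hu
    set v := l.get ⟨i+1, hi⟩ with hv
    have hshu : isShRow G x u := hget_sh _
    have hshv : isShRow G x v := hget_sh _
    have huv : u < v := hmono _ _ (Nat.lt_succ_self i)
    have hxu : x ≤ u := hshu.1
    have hvN : v ≤ G.N := hshv.2.1
    have hconst : ∀ w, u ≤ w → w ≤ v - 1 → delta (G.L x w) = delta (G.L x u) :=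
      const_on G x hG u (v-1) hxu (by omega)
        (fun w hw1 hw2 => hno_between i hi w hw1 (by omega))
    have hd1 : delta (G.L x (v-1)) = delta (G.L x u) := hconst (v-1) (by omega) le_rfl
    obtain ⟨hreqEq, hflagEq, hObs⟩ :=
      const_seg G x hG u (v-1) hxu (by omega) (by omega) hd1
    have hstep := G.consB x (v-1) (by omega) (by omega)
    have hv1 : v - 1 + 1 = v := by omega
    rw [hv1] at hstep
    have hkeyU : ReqB (G.L x (v-1)) ∪ ObsB (G.L x (v-1))
        = ReqB (G.L x u) ∪ ObsB (G.L x u) := by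
      rcases eq_or_lt_of_le (by omega : u ≤ v - 1) with h | h
      · rw [← h]
      · obtain ⟨h1, h2⟩ := hObs h
        rw [Finset.union_eq_left.mpr h1, Finset.union_eq_left.mpr h2, hreqEq]
    refine ⟨⟨by rw [hstep.1, hkeyU], ?_⟩, ?_, ?_, ?_⟩
    · intro ψ hψ hcond
      rw [← hflagEq ψ]
      apply hstep.2 ψ hψ
      rcases hcond with h | h | h
      · left; rw [hflagEq]; exact h
      · right; left; rw [hflagEq]; exact h
      · right; right; exact h
    · exact reqD_mono G x u v hxu (le_of_lt huv) hvN
    · intro p hp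
      exact prop_mono G x hG u v hxu (le_of_lt huv) hvN p hp
    · have hle := delta_mono G x hG u v hxu (le_of_lt huv) hvN
      have hne' := hshv.2.2 u huv hxu
      omega
  have hneB : shB G x ≠ [] := by
    unfold shB
    exact fun h => hne (List.map_eq_nil_iff.mp h)
  have hlenB : (shB G x).length = l.length := List.length_map _
  have hgetB : ∀ (i : ℕ) (hiB : i < (shB G x).length) (hil : i < l.length),
      (shB G x).get ⟨i, hiB⟩ = G.L x (l.get ⟨i, hil⟩) := by
    intro i hiB hil
    unfold shB
    rw [List.get_eq_getElem, List.getElem_map]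
    rfl
  constructor
  · refine ⟨hneB, ?_, ?_, ?_⟩
    · -- Initial
      show Fml.pi ∈ ((shB G x).head hneB).F
      rw [List.head_eq_getElem, ← List.get_eq_getElem (l := shB G x) (i := ⟨0, by omega⟩),
        hgetB 0 (by omega) hlen, hget0]
      exact initial_point G x hx
    · -- Final
      rw [List.getLast_eq_getElem, ← List.get_eq_getElem (i := ⟨(shB G x).length - 1, by omega⟩),
        hgetB _ _ (by omega)]
      set m := l.get ⟨(shB G x).length - 1, by omega⟩ with hm
      have hm' : m = l.get ⟨l.length - 1, hlast_idx⟩ := by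
        rw [hm]; congr 1; exact Fin.ext (by simp [hlenB])
      have hshm : isShRow G x m := hget_sh _
      have hdm : delta (G.L x G.N) = delta (G.L x m) := by
        refine const_on G x hG m G.N hshm.1 le_rfl ?_ G.N hshm.2.1 le_rfl
        intro w hw1 hw2
        rw [hm'] at hw1
        exact hno_after w hw1 hw2
      have hdia := range_dia_eq G x hG m G.N hshm.1 hshm.2.1 le_rfl hdm
      intro ψ hψ hflag
      have hmem : ψ ∈ diaSet (G.L x G.N) := by
        rw [hdia, diaSet, Finset.mem_filter]; exact ⟨hψ, hflag⟩
      rw [diaSet, Finset.mem_filter] at hmem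
      exact G.fulA x hx ψ hψ hmem.2
    · intro i hi
      have hil : i + 1 < l.length := by omega
      rw [hgetB (i+1) hi hil, hgetB i (Nat.lt_of_succ_lt hi) (Nat.lt_of_succ_lt hil)]
      obtain ⟨k1, k2, k3, _⟩ := key i hil
      exact ⟨k1, k2, k3⟩
  · intro i hi
    have hil : i + 1 < l.length := by omega
    rw [hgetB (i+1) hi hil, hgetB i (Nat.lt_of_succ_lt hi) (Nat.lt_of_succ_lt hil)]
    exact (key i hil).2.2.2


end
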